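/- arXiv:math/0111290 — 5 statements merged into one kernel-verified Lean document; each statement's English description precedes it below -/
import Mathlib

section
/- Let D' : Ω → Ω be an ℝ-linear operator that raises form degree by exactly 1 and raises total degree by at least 1, and suppose D₀ := −δ + D' satisfies D₀² = 0. If σ ∈ Ω⁰ = ℝ[[y¹,…,y^d]] is a 0-form with D₀σ = 0, then σ is uniquely determined by its constant term σ(0): in particular, if D₀σ = 0 and σ(0) = 0 then σ = 0. -/
/-! Formal differential forms with coefficients in `ℝ[[y¹,…,y^d]]`, encoded by their
coefficients: the component at `(S, a)` is the coefficient of `y^a dx^S`. -/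

/-- The space `Ω` of formal differential forms. -/
abbrev FormalForm (d : ℕ) := Finset (Fin d) → (Fin d →₀ ℕ) → ℝ

/-- Koszul sign `(-1)^{#{s ∈ S : s < i}}`. -/
noncomputable def ksgn {d : ℕ} (S : Finset (Fin d)) (i : Fin d) : ℝ :=
  (-1 : ℝ) ^ (S.filter (fun j => j < i)).card

/-- The operator `δ = Σᵢ dxⁱ ∧ ∂/∂yⁱ`. -/
noncomputable def deltaOp {d : ℕ} (ω : FormalForm d) : FormalForm d := fun S a =>
  ∑ i ∈ S, ksgn S i * ((a i + 1 : ℕ) : ℝ) * ω (S.erase i) (a + Finsupp.single i 1)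

/-- Total degree of the monomial `y^a dx^S`, namely `|a| + #S`. -/
def totalDeg {d : ℕ} (S : Finset (Fin d)) (a : Fin d →₀ ℕ) : ℕ :=
  (a.sum fun _ n => n) + S.card

/-- The connection `D₀ = -δ + D'`. -/
noncomputable def D0 {d : ℕ} (D' : FormalForm d →ₗ[ℝ] FormalForm d)
    (ω : FormalForm d) : FormalForm d :=
  -(deltaOp ω) + D' ω

/-- A formal power series `σ ∈ 𝒜_d = ℝ[[y¹,…,y^d]]` viewed as a `0`-form. -/
def ofSeries {d : ℕ} (f : (Fin d →₀ ℕ) → ℝ) : FormalForm d :=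
  fun S a => if S = ∅ then f a else 0

/-! A closed `0`-form `σ` satisfies `δσ = D'σ`. If `σ` vanishes in degrees `< n`, then `D'σ`
only has monomials of total degree `≥ n + 1`, whereas the coefficient of `y^b dxⁱ` in `δσ`, for
`|b| + 1 = n`, is `(bᵢ + 1) σ_{b + eᵢ}`. Hence `σ` also vanishes in degree `n`, and by induction
`σ = 0` once `σ(0) = 0`. Uniqueness follows by linearity. -/

namespace FormalForm

variable {d : ℕ}

def RaisesTotalDeg (D' : FormalForm d →ₗ[ℝ] FormalForm d) : Prop :=
  ∀ (m : ℕ) (ω : FormalForm d), (∀ S a, ω S a ≠ 0 → m ≤ totalDeg S a) →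
    ∀ S a, D' ω S a ≠ 0 → m + 1 ≤ totalDeg S a

lemma totalDeg_eq_degree_add_card (S : Finset (Fin d)) (a : Fin d →₀ ℕ) :
    totalDeg S a = a.degree + S.card :=
  rfl

lemma ksgn_singleton_self (i : Fin d) : ksgn {i} i = 1 := by
  simp [ksgn, Finset.filter_singleton]

lemma deltaOp_sub (ω₁ ω₂ : FormalForm d) : deltaOp (ω₁ - ω₂) = deltaOp ω₁ - deltaOp ω₂ := by
  funext S a
  simp only [deltaOp, Pi.sub_apply, ← Finset.sum_sub_distrib, mul_sub]

lemma D0_sub (D' : FormalForm d →ₗ[ℝ] FormalForm d) (ω₁ ω₂ : FormalForm d) :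
    D0 D' (ω₁ - ω₂) = D0 D' ω₁ - D0 D' ω₂ := by
  simp only [D0, deltaOp_sub, map_sub]
  abel

lemma ofSeries_sub (f g : (Fin d →₀ ℕ) → ℝ) : ofSeries (f - g) = ofSeries f - ofSeries g := by
  funext S a
  by_cases hS : S = ∅ <;> simp [ofSeries, hS]

lemma deltaOp_eq_of_D0_eq_zero {D' : FormalForm d →ₗ[ℝ] FormalForm d} {ω : FormalForm d}
    (h : D0 D' ω = 0) : deltaOp ω = D' ω :=
  neg_add_eq_zero.mp h

lemma deltaOp_ofSeries_singleton (f : (Fin d →₀ ℕ) → ℝ) (i : Fin d) (b : Fin d →₀ ℕ) :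
    deltaOp (ofSeries f) {i} b = ((b i + 1 : ℕ) : ℝ) * f (b + Finsupp.single i 1) := by
  simp [deltaOp, ksgn_singleton_self, ofSeries]

lemma le_totalDeg_of_ofSeries_ne_zero {f : (Fin d →₀ ℕ) → ℝ} {n : ℕ}
    (hf : ∀ a : Fin d →₀ ℕ, a.degree < n → f a = 0) (S : Finset (Fin d)) (a : Fin d →₀ ℕ)
    (ha : ofSeries f S a ≠ 0) : n ≤ totalDeg S a := by
  by_cases hS : S = ∅
  · subst hS
    simp only [ofSeries, if_true] at ha
    rw [totalDeg_eq_degree_add_card, Finset.card_empty, add_zero]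
    exact not_lt.mp (mt (hf a) ha)
  · simp [ofSeries, hS] at ha

lemma exists_eq_add_single_of_ne_zero {a : Fin d →₀ ℕ} (ha : a ≠ 0) :
    ∃ (i : Fin d) (b : Fin d →₀ ℕ), a = b + Finsupp.single i 1 := by
  obtain ⟨i, hi⟩ := Finsupp.ne_iff.mp ha
  refine ⟨i, a - Finsupp.single i 1, (tsub_add_cancel_of_le ?_).symm⟩
  exact Finsupp.single_le_iff.mpr (Nat.one_le_iff_ne_zero.mpr hi)

lemma eq_zero_of_degree_lt_of_D0_ofSeries_eq_zero {D' : FormalForm d →ₗ[ℝ] FormalForm d}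
    (htot : RaisesTotalDeg D') {f : (Fin d →₀ ℕ) → ℝ} (h : D0 D' (ofSeries f) = 0)
    (h0 : f 0 = 0) (n : ℕ) :
    ∀ a : Fin d →₀ ℕ, a.degree < n → f a = 0 := by
  induction n with
  | zero => simp
  | succ n ih =>
    intro a ha
    rcases (Nat.lt_succ_iff.mp ha).lt_or_eq with hlt | hdeg
    · exact ih a hlt
    by_cases ha0 : a = 0
    · rwa [ha0]
    obtain ⟨i, b, rfl⟩ := exists_eq_add_single_of_ne_zero ha0
    have hb : totalDeg {i} b = n := by
      rw [totalDeg_eq_degree_add_card, Finset.card_singleton, ← hdeg, map_add,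
        Finsupp.degree_single]
    have hD' : D' (ofSeries f) {i} b = 0 := by
      by_contra hne
      have := htot n _ (le_totalDeg_of_ofSeries_ne_zero ih) {i} b hne
      omega
    have hδ := deltaOp_ofSeries_singleton f i b
    rw [deltaOp_eq_of_D0_eq_zero h, hD'] at hδ
    exact (mul_eq_zero.mp hδ.symm).resolve_left (by positivity)

lemma eq_zero_of_D0_ofSeries_eq_zero {D' : FormalForm d →ₗ[ℝ] FormalForm d}
    (htot : RaisesTotalDeg D') {f : (Fin d →₀ ℕ) → ℝ} (h : D0 D' (ofSeries f) = 0)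
    (h0 : f 0 = 0) : f = 0 :=
  funext fun a =>
    eq_zero_of_degree_lt_of_D0_ofSeries_eq_zero htot h h0 (a.degree + 1) a (Nat.lt_succ_self _)

end FormalForm

theorem closed_zero_form_determined_by_constant_term_general (d : ℕ)
    (D' : FormalForm d →ₗ[ℝ] FormalForm d)
    (htot : ∀ (m : ℕ) (ω : FormalForm d), (∀ S a, ω S a ≠ 0 → m ≤ totalDeg S a) →
      ∀ S a, D' ω S a ≠ 0 → m + 1 ≤ totalDeg S a)
    (σ τ : (Fin d →₀ ℕ) → ℝ)
    (hσ : D0 D' (ofSeries σ) = 0) (hτ : D0 D' (ofSeries τ) = 0) :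
    (σ 0 = τ 0 → σ = τ) ∧ (σ 0 = 0 → σ = 0) := by
  refine ⟨fun h0 => ?_, FormalForm.eq_zero_of_D0_ofSeries_eq_zero htot hσ⟩
  have hclosed : D0 D' (ofSeries (σ - τ)) = 0 := by
    rw [FormalForm.ofSeries_sub, FormalForm.D0_sub, hσ, hτ, sub_zero]
  exact sub_eq_zero.mp
    (FormalForm.eq_zero_of_D0_ofSeries_eq_zero htot hclosed (by rw [Pi.sub_apply, h0, sub_self]))

/-- if `D'` raises form degree by exactly `1` and total degree by at
least `1` and `D₀ = -δ + D'` satisfies `D₀² = 0`, then a `D₀`-closed `0`-form `σ` is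
uniquely determined by its constant term `σ(0)`; in particular if `D₀σ = 0` and
`σ(0) = 0` then `σ = 0`. -/
theorem closed_zero_form_determined_by_constant_term (d : ℕ) (hd : 1 ≤ d)
    (D' : FormalForm d →ₗ[ℝ] FormalForm d)
    (hform : ∀ (k : ℕ) (ω : FormalForm d), (∀ S a, ω S a ≠ 0 → S.card = k) →
      ∀ S a, D' ω S a ≠ 0 → S.card = k + 1)
    (htot : ∀ (m : ℕ) (ω : FormalForm d), (∀ S a, ω S a ≠ 0 → m ≤ totalDeg S a) →
      ∀ S a, D' ω S a ≠ 0 → m + 1 ≤ totalDeg S a)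
    (hflat : ∀ ω : FormalForm d, D0 D' (D0 D' ω) = 0)
    (σ τ : (Fin d →₀ ℕ) → ℝ)
    (hσ : D0 D' (ofSeries σ) = 0) (hτ : D0 D' (ofSeries τ) = 0) :
    (σ 0 = τ 0 → σ = τ) ∧ (σ 0 = 0 → σ = 0) :=
  closed_zero_form_determined_by_constant_term_general d D' htot σ τ hσ hτ
end

section
/- The Moyal product is associative: for a constant antisymmetric matrix (α^{ij})_{1≤i,j≤d} over ℝ, the ℝ[[ε]]-bilinear product ⋆ on ℝ[y¹,…,y^d][[ε]] determined by f ⋆ g = Σ_{n=0}^∞ εⁿ Bₙ(f,g) for polynomials f, g, where Bₙ(f,g) = (1/n!) Σ_{i₁,…,iₙ,j₁,…,jₙ=1}^{d} α^{i₁j₁}⋯α^{iₙjₙ} (∂_{i₁}⋯∂_{iₙ}f)(∂_{j₁}⋯∂_{jₙ}g), satisfies (F ⋆ G) ⋆ H = F ⋆ (G ⋆ H) for all F, G, H ∈ ℝ[y¹,…,y^d][[ε]]. -/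
open MvPolynomial

/-- Iterated partial derivative `∂_{i 0} ⋯ ∂_{i (n-1)} f`. -/
noncomputable def pderivMulti {d n : ℕ} (i : Fin n → Fin d)
    (f : MvPolynomial (Fin d) ℝ) : MvPolynomial (Fin d) ℝ :=
  (List.ofFn i).foldr (fun idx g => MvPolynomial.pderiv idx g) f

/-- The `n`-th Moyal bidifferential operator
`Bₙ(f,g) = (1/n!) Σ α^{i₁j₁}⋯α^{iₙjₙ} (∂_{i₁}⋯∂_{iₙ}f)(∂_{j₁}⋯∂_{jₙ}g)`. -/
noncomputable def moyalB {d : ℕ} (α : Fin d → Fin d → ℝ) (n : ℕ)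
    (f g : MvPolynomial (Fin d) ℝ) : MvPolynomial (Fin d) ℝ :=
  ((n.factorial : ℝ))⁻¹ • ∑ i : Fin n → Fin d, ∑ j : Fin n → Fin d,
    (∏ k, α (i k) (j k)) • (pderivMulti i f * pderivMulti j g)

/-- The Moyal star product on `ℝ[y¹,…,y^d][[ε]]` (series encoded by their
coefficients `ℕ → ℝ[y]`): the coefficient of `εⁿ` in `F ⋆ G` is
`Σ_{a+b+c=n} B_c(F_a, G_b)`. -/
noncomputable def moyalStar {d : ℕ} (α : Fin d → Fin d → ℝ)
    (F G : ℕ → MvPolynomial (Fin d) ℝ) : ℕ → MvPolynomial (Fin d) ℝ :=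
  fun n => ∑ p ∈ Finset.HasAntidiagonal.antidiagonal n, ∑ q ∈ Finset.HasAntidiagonal.antidiagonal p.2,
    moyalB α p.1 (F q.1) (G q.2)

/-!
Realize `ℝ[y] ⊗ ℝ[y] ⊗ ℝ[y]` as the polynomials in three copies `y⁽⁰⁾, y⁽¹⁾, y⁽²⁾` of the
variables (indexed by `Fin 3 × Fin d`); `rename Prod.snd` is then the multiplication map `μ`,
which identifies the copies. The chain rule `∂ᵢ ∘ μ = μ ∘ Σₐ ∂ᵢ⁽ᵃ⁾` shows that when `p` only
involves the copies in `S` and `q` those in a disjoint `T`,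
`B_c(μ p, μ q) = μ (P_{S,T}^c / c! (p q))`, where `P_{S,T} = bidiffOp α S T` is
`α^{ij} (Σ_{a∈S} ∂ᵢ⁽ᵃ⁾)(Σ_{b∈T} ∂ⱼ⁽ᵇ⁾)`.
By the binomial theorem for these commuting operators, `Σ_{c+c'=m} B_c(B_{c'}(f,g),h)` and
`Σ_{c+c'=m} B_c(f,B_{c'}(g,h))` are `μ` of `(P_{01,2} + P_{0,1})^m / m!` and
`(P_{0,12} + P_{1,2})^m / m!` applied to `f(y⁽⁰⁾) g(y⁽¹⁾) h(y⁽²⁾)`, and both operators equal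
`P_{0,1} + P_{0,2} + P_{1,2}`. Associativity of the series product is then a reindexing of the
sums over `a + b + c = n`.
-/

open Finset
open scoped Nat

theorem Commute.inv_factorial_smul_add_pow {𝕜 A : Type*} [Field 𝕜] [CharZero 𝕜] [Ring A]
    [Algebra 𝕜 A] {a b : A} (h : Commute a b) (m : ℕ) :
    (m ! : 𝕜)⁻¹ • (a + b) ^ m =
      ∑ p ∈ antidiagonal m, ((p.1 ! : 𝕜)⁻¹ • a ^ p.1) * ((p.2 ! : 𝕜)⁻¹ • b ^ p.2) := by
  rw [h.add_pow', smul_sum]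
  refine sum_congr rfl fun p hp => ?_
  rw [← Nat.cast_smul_eq_nsmul 𝕜, smul_smul, smul_mul_smul_comm, ← mem_antidiagonal.mp hp,
    Nat.cast_add_choose, div_eq_mul_inv,
    inv_mul_cancel_left₀ (Nat.cast_ne_zero.2 (Nat.factorial_ne_zero _)), mul_inv]

theorem MvPolynomial.pderiv_comm {R σ : Type*} [CommSemiring R] (i j : σ)
    (p : MvPolynomial σ R) : pderiv i (pderiv j p) = pderiv j (pderiv i p) := by
  classical
  induction p using MvPolynomial.induction_on with
  | C a => simp
  | add p q hp hq => simp [hp, hq]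
  | mul_X p k h =>
    simp only [pderiv_mul, pderiv_X, map_add, h, Pi.single_apply]
    split_ifs <;> subst_vars <;> simp

theorem Fintype.sum_fin_succ_pi {α M : Type*} [Fintype α] [AddCommMonoid M]
    {n : ℕ} (f : (Fin (n + 1) → α) → M) :
    ∑ i, f i = ∑ x, ∑ i : Fin n → α, f (Fin.cons x i) := by
  rw [← (Fin.consEquiv fun _ => α).sum_comp f, Fintype.sum_prod_type]
  rfl

section SeriesStar

variable {R M : Type*} [CommSemiring R] [AddCommMonoid M] [Module R M]

def seriesStar (B : ℕ → M →ₗ[R] M →ₗ[R] M) (F G : ℕ → M) : ℕ → M :=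
  fun n => ∑ p ∈ antidiagonal n, ∑ q ∈ antidiagonal p.2, B p.1 (F q.1) (G q.2)

theorem seriesStar_seriesStar_left (B : ℕ → M →ₗ[R] M →ₗ[R] M) (F G H : ℕ → M) (n : ℕ) :
    seriesStar B (seriesStar B F G) H n =
      ∑ p ∈ antidiagonal n, ∑ q ∈ antidiagonal p.2, ∑ r ∈ antidiagonal q.2,
        ∑ m ∈ antidiagonal p.1, B m.1 (B m.2 (F q.1) (G r.1)) (H r.2) := by
  simp only [seriesStar, map_sum, LinearMap.sum_apply, sum_sigma']
  apply sum_nbij'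
    (fun ⟨(c, _), (_, h), (c', _), (a, b)⟩ => ⟨(c + c', a + b + h), (a, b + h), (b, h), (c, c')⟩)
    (fun ⟨_, (a, _), (b, h), (c, c')⟩ =>
      ⟨(c, c' + a + b + h), (c' + a + b, h), (c', a + b), (a, b)⟩)
    ?_ ?_ ?_ ?_ fun ⟨_, _, _, _⟩ _ => rfl
  all_goals
    rintro ⟨⟨_, _⟩, ⟨_, _⟩, ⟨_, _⟩, ⟨_, _⟩⟩ hx
    simp only [mem_sigma, HasAntidiagonal.mem_antidiagonal, Sigma.mk.injEq, Prod.mk.injEq,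
      heq_eq_eq, and_true, true_and] at hx ⊢
    omega

theorem seriesStar_seriesStar_right (B : ℕ → M →ₗ[R] M →ₗ[R] M) (F G H : ℕ → M) (n : ℕ) :
    seriesStar B F (seriesStar B G H) n =
      ∑ p ∈ antidiagonal n, ∑ q ∈ antidiagonal p.2, ∑ r ∈ antidiagonal q.2,
        ∑ m ∈ antidiagonal p.1, B m.1 (F q.1) (B m.2 (G r.1) (H r.2)) := by
  simp only [seriesStar, map_sum, sum_sigma']
  apply sum_nbij'
    (fun ⟨(c, _), (a, _), (c', _), (b, h)⟩ => ⟨(c + c', a + b + h), (a, b + h), (b, h), (c, c')⟩)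
    (fun ⟨_, (a, _), (b, h), (c, c')⟩ =>
      ⟨(c, a + c' + b + h), (a, c' + b + h), (c', b + h), (b, h)⟩)
    ?_ ?_ ?_ ?_ fun ⟨_, _, _, _⟩ _ => rfl
  all_goals
    rintro ⟨⟨_, _⟩, ⟨_, _⟩, ⟨_, _⟩, ⟨_, _⟩⟩ hx
    simp only [mem_sigma, HasAntidiagonal.mem_antidiagonal, Sigma.mk.injEq, Prod.mk.injEq,
      heq_eq_eq, and_true, true_and] at hx ⊢
    omega

theorem seriesStar_assoc (B : ℕ → M →ₗ[R] M →ₗ[R] M)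
    (hB : ∀ m f g h, ∑ p ∈ antidiagonal m, B p.1 (B p.2 f g) h =
      ∑ p ∈ antidiagonal m, B p.1 f (B p.2 g h))
    (F G H : ℕ → M) : seriesStar B (seriesStar B F G) H = seriesStar B F (seriesStar B G H) := by
  funext n
  simp only [seriesStar_seriesStar_left, seriesStar_seriesStar_right, hB]

end SeriesStar

section IteratedDerivative

variable {d n : ℕ}

theorem pderivMulti_cons (x : Fin d) (i : Fin n → Fin d) (f : MvPolynomial (Fin d) ℝ) :
    pderivMulti (Fin.cons x i) f = pderiv x (pderivMulti i f) := by
  simp [pderivMulti, List.ofFn_succ]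

theorem pderivMulti_pderiv (i : Fin n → Fin d) (x : Fin d) (f : MvPolynomial (Fin d) ℝ) :
    pderivMulti i (pderiv x f) = pderiv x (pderivMulti i f) := by
  unfold pderivMulti
  induction List.ofFn i with
  | nil => rfl
  | cons a l ih => simp [ih, pderiv_comm]

end IteratedDerivative

section Lift

variable {R ι σ : Type*} [CommSemiring R]

noncomputable def diagPDeriv (S : Finset ι) (i : σ) :
    Derivation R (MvPolynomial (ι × σ) R) (MvPolynomial (ι × σ) R) :=
  ∑ a ∈ S, pderiv (a, i)

theorem diagPDeriv_apply (S : Finset ι) (i : σ) (p : MvPolynomial (ι × σ) R) :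
    diagPDeriv S i p = ∑ a ∈ S, pderiv (a, i) p := by
  rw [diagPDeriv, ← Derivation.coeFnAddMonoidHom_apply, map_sum, Finset.sum_apply]
  rfl

theorem diagPDeriv_mul (S : Finset ι) (i : σ) (p q : MvPolynomial (ι × σ) R) :
    diagPDeriv S i (p * q) = diagPDeriv S i p * q + p * diagPDeriv S i q := by
  rw [Derivation.leibniz, smul_eq_mul, smul_eq_mul, add_comm, mul_comm q]

theorem pderiv_diagPDeriv (v : ι × σ) (S : Finset ι) (i : σ) (p : MvPolynomial (ι × σ) R) :
    pderiv v (diagPDeriv S i p) = diagPDeriv S i (pderiv v p) := by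
  simp only [diagPDeriv_apply, map_sum, pderiv_comm v]

theorem diagPDeriv_comm (S T : Finset ι) (i j : σ) (p : MvPolynomial (ι × σ) R) :
    diagPDeriv S i (diagPDeriv T j p) = diagPDeriv T j (diagPDeriv S i p) := by
  rw [diagPDeriv_apply S i (diagPDeriv T j p), diagPDeriv_apply S i p, map_sum]
  simp only [pderiv_diagPDeriv]

theorem commute_diagPDeriv (S T : Finset ι) (i j : σ) :
    Commute (diagPDeriv (R := R) S i).toLinearMap (diagPDeriv T j).toLinearMap :=
  LinearMap.ext (diagPDeriv_comm S T i j)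

theorem commute_pderiv_diagPDeriv (v : ι × σ) (S : Finset ι) (i : σ) :
    Commute (pderiv (R := R) v).toLinearMap (diagPDeriv S i).toLinearMap :=
  LinearMap.ext (pderiv_diagPDeriv v S i)

theorem MvPolynomial.pderiv_rename_snd [Fintype ι] (i : σ) (p : MvPolynomial (ι × σ) R) :
    pderiv i (rename Prod.snd p) = rename Prod.snd (diagPDeriv univ i p) := by
  classical
  rw [diagPDeriv_apply, map_sum]
  induction p using MvPolynomial.induction_on with
  | C r => simp
  | add p q hp hq => simp [hp, hq, sum_add_distrib]
  | mul_X p v h =>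
    obtain ⟨a, k⟩ := v
    by_cases hk : k = i <;>
      simp [h, pderiv_X, Pi.single_apply, sum_add_distrib, Prod.ext_iff, hk, mul_sum, apply_ite]

theorem MvPolynomial.rename_snd_rename_mk (a : ι) (f : MvPolynomial σ R) :
    rename Prod.snd (rename (Prod.mk a) f) = f := by
  rw [rename_rename]
  exact rename_id_apply f

def DependsOnlyOn (S : Finset ι) (p : MvPolynomial (ι × σ) R) : Prop :=
  ∀ a ∉ S, ∀ i, pderiv (a, i) p = 0

theorem dependsOnlyOn_rename_mk (a : ι) (f : MvPolynomial σ R) :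
    DependsOnlyOn {a} (rename (Prod.mk a) f) := by
  classical
  intro b hb i
  induction f using MvPolynomial.induction_on with
  | C r => simp
  | add p q hp hq => simp [hp, hq]
  | mul_X p k hp => simp [hp, pderiv_X, notMem_singleton.1 hb]

namespace DependsOnlyOn

variable {S T : Finset ι} {p q : MvPolynomial (ι × σ) R}

theorem mono (hp : DependsOnlyOn S p) (h : S ⊆ T) : DependsOnlyOn T p :=
  fun a ha => hp a (notMem_mono h ha)

theorem mul [DecidableEq ι] (hp : DependsOnlyOn S p) (hq : DependsOnlyOn T q) :
    DependsOnlyOn (S ∪ T) (p * q) := fun a ha i => by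
  rw [notMem_union] at ha
  rw [pderiv_mul, hp a ha.1, hq a ha.2, zero_mul, mul_zero, add_zero]

theorem diagPDeriv (hp : DependsOnlyOn S p) (U : Finset ι) (i : σ) :
    DependsOnlyOn S (diagPDeriv U i p) := fun a ha j => by
  rw [pderiv_diagPDeriv, hp a ha j, map_zero]

theorem diagPDeriv_eq_zero (hp : DependsOnlyOn S p) {U : Finset ι} (h : Disjoint S U) (i : σ) :
    _root_.diagPDeriv U i p = 0 := by
  rw [diagPDeriv_apply]
  exact sum_eq_zero fun a ha => hp a (disjoint_right.1 h ha) i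

theorem pderiv_rename_snd [Fintype ι] (hp : DependsOnlyOn S p) (i : σ) :
    pderiv i (rename Prod.snd p) = rename Prod.snd (_root_.diagPDeriv S i p) := by
  rw [MvPolynomial.pderiv_rename_snd, diagPDeriv_apply, diagPDeriv_apply]
  exact congrArg _ (sum_subset (subset_univ S) fun a _ ha => hp a ha i).symm

end DependsOnlyOn

variable [Fintype σ]

noncomputable def bidiffOp (α : σ → σ → R) (S T : Finset ι) :
    Module.End R (MvPolynomial (ι × σ) R) :=
  ∑ i, ∑ j, α i j • ((diagPDeriv S i).toLinearMap * (diagPDeriv T j).toLinearMap)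

theorem commute_bidiffOp_of_forall {α : σ → σ → R} {S T : Finset ι}
    {A : Module.End R (MvPolynomial (ι × σ) R)}
    (hS : ∀ i, Commute A (diagPDeriv S i).toLinearMap)
    (hT : ∀ j, Commute A (diagPDeriv T j).toLinearMap) : Commute A (bidiffOp α S T) :=
  .sum_right _ _ _ fun i _ => .sum_right _ _ _ fun j _ => ((hS i).mul_right (hT j)).smul_right _

theorem bidiffOp_commute (α : σ → σ → R) (S T S' T' : Finset ι) :
    Commute (bidiffOp α S T) (bidiffOp α S' T') :=
  have hD (U : Finset ι) (i : σ) : Commute (diagPDeriv U i).toLinearMap (bidiffOp α S' T') :=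
    commute_bidiffOp_of_forall (commute_diagPDeriv U S' i) (commute_diagPDeriv U T' i)
  (commute_bidiffOp_of_forall (fun i => (hD S i).symm) fun j => (hD T j).symm).symm

theorem bidiffOp_union_left [DecidableEq ι] (α : σ → σ → R) {S S' : Finset ι}
    (h : Disjoint S S') (T : Finset ι) :
    bidiffOp α (S ∪ S') T = bidiffOp α S T + bidiffOp α S' T := by
  simp only [bidiffOp, diagPDeriv, sum_union h, Derivation.coe_add_linearMap, add_mul, smul_add,
    sum_add_distrib]

theorem bidiffOp_union_right [DecidableEq ι] (α : σ → σ → R) (S : Finset ι) {T T' : Finset ι}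
    (h : Disjoint T T') :
    bidiffOp α S (T ∪ T') = bidiffOp α S T + bidiffOp α S T' := by
  simp only [bidiffOp, diagPDeriv, sum_union h, Derivation.coe_add_linearMap, mul_add, smul_add,
    sum_add_distrib]

theorem DependsOnlyOn.bidiffOp_pow_smul {U : Finset ι} {p : MvPolynomial (ι × σ) R}
    (hp : DependsOnlyOn U p) (α : σ → σ → R) (S T : Finset ι) (r : R) (c : ℕ) :
    DependsOnlyOn U ((r • bidiffOp α S T ^ c) p) := fun a ha i => by
  have hv := commute_bidiffOp_of_forall (α := α) (commute_pderiv_diagPDeriv (a, i) S)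
    (commute_pderiv_diagPDeriv (a, i) T)
  have := LinearMap.congr_fun ((hv.pow_right c).smul_right r).eq p
  simp only [Module.End.mul_apply, Derivation.coeFn_coe] at this
  rw [this, hp a ha i, map_zero]

theorem bidiffOp_pow_smul_mul_left (α : σ → σ → R) {S T U : Finset ι} (r : R) (c : ℕ)
    {q : MvPolynomial (ι × σ) R} (hq : DependsOnlyOn U q) (hS : Disjoint U S)
    (hT : Disjoint U T) (p : MvPolynomial (ι × σ) R) :
    (r • bidiffOp α S T ^ c) (q * p) = q * (r • bidiffOp α S T ^ c) p := by
  have hD {V : Finset ι} (hV : Disjoint U V) (i : σ) :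
      Commute (LinearMap.mulLeft R q) (diagPDeriv V i).toLinearMap :=
    LinearMap.ext fun p => by simp [hq.diagPDeriv_eq_zero hV]
  have hcomm := ((commute_bidiffOp_of_forall (α := α) (hD hS) (hD hT)).pow_right c).smul_right r
  exact (LinearMap.congr_fun hcomm.eq p).symm

theorem bidiffOp_pow_smul_mul_right (α : σ → σ → R) {S T U : Finset ι} (r : R) (c : ℕ)
    {q : MvPolynomial (ι × σ) R} (hq : DependsOnlyOn U q) (hS : Disjoint U S)
    (hT : Disjoint U T) (p : MvPolynomial (ι × σ) R) :
    (r • bidiffOp α S T ^ c) (p * q) = (r • bidiffOp α S T ^ c) p * q := by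
  rw [mul_comm, bidiffOp_pow_smul_mul_left α r c hq hS hT, mul_comm]

theorem bidiffOp_mul (α : σ → σ → R) {S T : Finset ι} (hST : Disjoint S T)
    {p q : MvPolynomial (ι × σ) R} (hp : DependsOnlyOn S p) (hq : DependsOnlyOn T q) :
    bidiffOp α S T (p * q) = ∑ i, ∑ j, α i j • (diagPDeriv S i p * diagPDeriv T j q) := by
  simp only [bidiffOp, LinearMap.sum_apply, LinearMap.smul_apply, Module.End.mul_apply,
    Derivation.coeFn_coe, diagPDeriv_mul, hp.diagPDeriv_eq_zero hST, diagPDeriv_comm S T,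
    hq.diagPDeriv_eq_zero hST.symm, map_zero, zero_mul, zero_add, mul_zero, add_zero]

end Lift

section Moyal

variable {d : ℕ}

theorem moyalB_zero (α : Fin d → Fin d → ℝ) (f g : MvPolynomial (Fin d) ℝ) :
    moyalB α 0 f g = f * g := by
  simp [moyalB, pderivMulti]

theorem moyalB_succ (α : Fin d → Fin d → ℝ) (c : ℕ) (f g : MvPolynomial (Fin d) ℝ) :
    moyalB α (c + 1) f g =
      ((c : ℝ) + 1)⁻¹ • ∑ i, ∑ j, α i j • moyalB α c (pderiv i f) (pderiv j g) := by
  unfold moyalB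
  simp_rw [Fintype.sum_fin_succ_pi, pderivMulti_cons, Fin.prod_univ_succ, Fin.cons_zero,
    Fin.cons_succ, pderivMulti_pderiv, smul_sum, smul_smul, Nat.factorial_succ]
  refine sum_congr rfl fun x _ => ?_
  rw [sum_comm]
  refine sum_congr rfl fun y _ => sum_congr rfl fun i _ => sum_congr rfl fun j _ => ?_
  congr 1
  push_cast
  rw [mul_inv]
  ring

noncomputable def moyalBₗ (α : Fin d → Fin d → ℝ) :
    ℕ → MvPolynomial (Fin d) ℝ →ₗ[ℝ] MvPolynomial (Fin d) ℝ →ₗ[ℝ] MvPolynomial (Fin d) ℝ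
  | 0 => LinearMap.mul ℝ _
  | c + 1 => ((c : ℝ) + 1)⁻¹ • ∑ i, ∑ j,
      α i j • (moyalBₗ α c).compl₁₂ (pderiv i).toLinearMap (pderiv j).toLinearMap

theorem moyalBₗ_apply (α : Fin d → Fin d → ℝ) (n : ℕ) (f g : MvPolynomial (Fin d) ℝ) :
    moyalBₗ α n f g = moyalB α n f g := by
  induction n generalizing f g with
  | zero => simp [moyalBₗ, moyalB_zero]
  | succ c ih => simp [moyalBₗ, moyalB_succ, ih]

theorem moyalStar_eq_seriesStar (α : Fin d → Fin d → ℝ) :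
    moyalStar α = seriesStar (moyalBₗ α) := by
  funext F G n
  simp only [moyalStar, seriesStar, moyalBₗ_apply]

theorem moyalB_rename_snd {ι : Type*} [Fintype ι] (α : Fin d → Fin d → ℝ) {S T : Finset ι}
    (hST : Disjoint S T) (c : ℕ) {p q : MvPolynomial (ι × Fin d) ℝ}
    (hp : DependsOnlyOn S p) (hq : DependsOnlyOn T q) :
    moyalB α c (rename Prod.snd p) (rename Prod.snd q) =
      rename Prod.snd (((c ! : ℝ)⁻¹ • bidiffOp α S T ^ c) (p * q)) := by
  induction c generalizing p q with
  | zero => simp [moyalB_zero]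
  | succ c ih =>
    calc moyalB α (c + 1) (rename Prod.snd p) (rename Prod.snd q)
        = ((c : ℝ) + 1)⁻¹ • ∑ i, ∑ j, α i j • rename Prod.snd
            (((c ! : ℝ)⁻¹ • bidiffOp α S T ^ c) (diagPDeriv S i p * diagPDeriv T j q)) := by
          rw [moyalB_succ]
          refine congrArg _ (sum_congr rfl fun i _ => sum_congr rfl fun j _ => ?_)
          rw [hp.pderiv_rename_snd, hq.pderiv_rename_snd,
            ih (hp.diagPDeriv S i) (hq.diagPDeriv T j)]
      _ = rename Prod.snd ((((c + 1)! : ℝ)⁻¹ • bidiffOp α S T ^ (c + 1)) (p * q)) := by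
          rw [pow_succ, LinearMap.smul_apply, Module.End.mul_apply, bidiffOp_mul α hST hp hq]
          simp only [map_sum, map_smul, LinearMap.smul_apply, smul_sum, smul_smul]
          refine sum_congr rfl fun i _ => sum_congr rfl fun j _ => ?_
          congr 1
          push_cast [Nat.factorial_succ]
          rw [mul_inv]
          ring

noncomputable def tripleTensor (f g h : MvPolynomial (Fin d) ℝ) : MvPolynomial (Fin 3 × Fin d) ℝ :=
  rename (Prod.mk 0) f * rename (Prod.mk 1) g * rename (Prod.mk 2) h

variable (α : Fin d → Fin d → ℝ) (f g h : MvPolynomial (Fin d) ℝ)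

theorem sum_moyalB_moyalB_left (m : ℕ) :
    ∑ p ∈ antidiagonal m, moyalB α p.1 (moyalB α p.2 f g) h =
      rename Prod.snd (((m ! : ℝ)⁻¹ • (bidiffOp α {0, 1} {2} + bidiffOp α {0} {1}) ^ m :
        Module.End ℝ _) (tripleTensor f g h)) := by
  have hf := dependsOnlyOn_rename_mk (R := ℝ) (0 : Fin 3) f
  have hg := dependsOnlyOn_rename_mk (R := ℝ) (1 : Fin 3) g
  have hh := dependsOnlyOn_rename_mk (R := ℝ) (2 : Fin 3) h
  have hterm (p : ℕ × ℕ) : moyalB α p.1 (moyalB α p.2 f g) h = rename Prod.snd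
      ((((p.1 ! : ℝ)⁻¹ • bidiffOp α {0, 1} {2} ^ p.1) * ((p.2 ! : ℝ)⁻¹ • bidiffOp α {0} {1} ^ p.2) :
        Module.End ℝ _) (tripleTensor f g h)) := by
    rw [tripleTensor]
    conv_lhs => rw [← rename_snd_rename_mk (0 : Fin 3) f, ← rename_snd_rename_mk (1 : Fin 3) g,
      ← rename_snd_rename_mk (2 : Fin 3) h]
    have hfg := ((hf.mul hg).mono (T := {0, 1}) (by decide)).bidiffOp_pow_smul α {0} {1}
      (p.2 ! : ℝ)⁻¹ p.2
    rw [moyalB_rename_snd α (by decide) p.2 hf hg, moyalB_rename_snd α (by decide) p.1 hfg hh,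
      Module.End.mul_apply, ← bidiffOp_pow_smul_mul_right α _ _ hh (by decide) (by decide)]
  rw [sum_congr rfl fun p _ => hterm p, ← map_sum, ← LinearMap.sum_apply,
    ← (bidiffOp_commute α _ _ _ _).inv_factorial_smul_add_pow]

theorem sum_moyalB_moyalB_right (m : ℕ) :
    ∑ p ∈ antidiagonal m, moyalB α p.1 f (moyalB α p.2 g h) =
      rename Prod.snd (((m ! : ℝ)⁻¹ • (bidiffOp α {0} {1, 2} + bidiffOp α {1} {2}) ^ m :
        Module.End ℝ _) (tripleTensor f g h)) := by
  have hf := dependsOnlyOn_rename_mk (R := ℝ) (0 : Fin 3) f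
  have hg := dependsOnlyOn_rename_mk (R := ℝ) (1 : Fin 3) g
  have hh := dependsOnlyOn_rename_mk (R := ℝ) (2 : Fin 3) h
  have hterm (p : ℕ × ℕ) : moyalB α p.1 f (moyalB α p.2 g h) = rename Prod.snd
      ((((p.1 ! : ℝ)⁻¹ • bidiffOp α {0} {1, 2} ^ p.1) * ((p.2 ! : ℝ)⁻¹ • bidiffOp α {1} {2} ^ p.2) :
        Module.End ℝ _) (tripleTensor f g h)) := by
    rw [tripleTensor]
    conv_lhs => rw [← rename_snd_rename_mk (0 : Fin 3) f, ← rename_snd_rename_mk (1 : Fin 3) g,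
      ← rename_snd_rename_mk (2 : Fin 3) h]
    have hgh := ((hg.mul hh).mono (T := {1, 2}) (by decide)).bidiffOp_pow_smul α {1} {2}
      (p.2 ! : ℝ)⁻¹ p.2
    rw [moyalB_rename_snd α (by decide) p.2 hg hh, moyalB_rename_snd α (by decide) p.1 hf hgh,
      Module.End.mul_apply, mul_assoc,
      ← bidiffOp_pow_smul_mul_left α _ _ hf (by decide) (by decide)]
  rw [sum_congr rfl fun p _ => hterm p, ← map_sum, ← LinearMap.sum_apply,
    ← (bidiffOp_commute α _ _ _ _).inv_factorial_smul_add_pow]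

theorem sum_moyalB_moyalB_assoc (m : ℕ) :
    ∑ p ∈ antidiagonal m, moyalB α p.1 (moyalB α p.2 f g) h =
      ∑ p ∈ antidiagonal m, moyalB α p.1 f (moyalB α p.2 g h) := by
  have hop : bidiffOp α {0, 1} {2} + bidiffOp α {0} {1} =
      bidiffOp (ι := Fin 3) α {0} {1, 2} + bidiffOp α {1} {2} := by
    rw [insert_eq, insert_eq, bidiffOp_union_left α (by decide),
      bidiffOp_union_right α _ (by decide)]
    abel
  rw [sum_moyalB_moyalB_left, sum_moyalB_moyalB_right, hop]

end Moyal

theorem moyal_associative_general (d : ℕ) (α : Fin d → Fin d → ℝ)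
    (F G H : ℕ → MvPolynomial (Fin d) ℝ) :
    moyalStar α (moyalStar α F G) H = moyalStar α F (moyalStar α G H) := by
  simp only [moyalStar_eq_seriesStar]
  refine seriesStar_assoc _ (fun m f g h => ?_) F G H
  simpa only [moyalBₗ_apply] using sum_moyalB_moyalB_assoc α f g h m

/-- the Moyal product associated to a constant antisymmetric matrix
`α` is associative. -/
theorem moyal_associative (d : ℕ) (hd : 1 ≤ d) (α : Fin d → Fin d → ℝ)
    (hα : ∀ i j, α i j = - α j i)
    (F G H : ℕ → MvPolynomial (Fin d) ℝ) :
    moyalStar α (moyalStar α F G) H = moyalStar α F (moyalStar α G H) :=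
  moyal_associative_general d α F G H
end

section
/- Let R be a commutative ℝ-algebra and ⋆ an associative formal deformation of R with B₀(f,g) = fg. Then the bracket {f,g} := B₁(f,g) − B₁(g,f) is a Poisson bracket on R: it is ℝ-bilinear, antisymmetric, satisfies the Jacobi identity {f,{g,h}} + {g,{h,f}} + {h,{f,g}} = 0, and satisfies the Leibniz rule {f, gh} = {f,g}h + g{f,h} for all f, g, h ∈ R. -/
/-- The star product on `R[[ε]]` (series encoded by their coefficients `ℕ → R`)
associated to a family of ℝ-bilinear maps `Bₙ : R × R → R`: the coefficient of
`εⁿ` in `F ⋆ G` is `Σ_{a+b+c=n} B_c(F_a, G_b)`. -/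
noncomputable def starDeform {R : Type*} [CommRing R] [Algebra ℝ R]
    (B : ℕ → R →ₗ[ℝ] R →ₗ[ℝ] R) (F G : ℕ → R) : ℕ → R :=
  fun n => ∑ p ∈ Finset.HasAntidiagonal.antidiagonal n, ∑ q ∈ Finset.HasAntidiagonal.antidiagonal p.2,
    B p.1 (F q.1) (G q.2)

/-!
Feed the constant series `f`, `g`, `h` into the associativity of `⋆`: the coefficient of `εⁿ`
gives `∑_{i+j=n} B_i(B_j(f,g),h) = ∑_{i+j=n} B_i(f,B_j(g,h))`. At order one this is the
Hochschild cocycle identity for `B₁`, whose antisymmetrisation is the Leibniz rule. At order two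
it says that the associator of `B₁` is the Hochschild coboundary of `B₂`; since `R` is
commutative, the alternating sum of such a coboundary over the permutations of `f, g, h`
vanishes, while the alternating sum of the associator of `B₁` is the Jacobiator of `{·,·}`.
-/

open Finset

theorem Finset.Nat.sum_antidiagonal_eq_apply_self_zero {M : Type*} [AddCommMonoid M] (n : ℕ)
    {φ : ℕ × ℕ → M} (hφ : ∀ q : ℕ × ℕ, q.2 ≠ 0 → φ q = 0) :
    ∑ q ∈ antidiagonal n, φ q = φ (n, 0) := by
  cases n with
  | zero => simp
  | succ n => simp [Nat.sum_antidiagonal_succ', hφ]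

theorem Finset.Nat.sum_antidiagonal_eq_apply_zero_self {M : Type*} [AddCommMonoid M] (n : ℕ)
    {φ : ℕ × ℕ → M} (hφ : ∀ q : ℕ × ℕ, q.1 ≠ 0 → φ q = 0) :
    ∑ q ∈ antidiagonal n, φ q = φ (0, n) := by
  cases n with
  | zero => simp
  | succ n => simp [Nat.sum_antidiagonal_succ, hφ]

namespace starDeform

variable {R : Type*} [CommRing R] [Algebra ℝ R] (B : ℕ → R →ₗ[ℝ] R →ₗ[ℝ] R)

theorem single_zero_right (F : ℕ → R) (h : R) (n : ℕ) :
    starDeform B F (Pi.single 0 h) n = ∑ p ∈ antidiagonal n, B p.1 (F p.2) h := by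
  refine sum_congr rfl fun p _ => ?_
  rw [Nat.sum_antidiagonal_eq_apply_self_zero]
  · simp
  · intro q hq
    simp [hq]

theorem single_zero_left (f : R) (G : ℕ → R) (n : ℕ) :
    starDeform B (Pi.single 0 f) G n = ∑ p ∈ antidiagonal n, B p.1 f (G p.2) := by
  refine sum_congr rfl fun p _ => ?_
  rw [Nat.sum_antidiagonal_eq_apply_zero_self]
  · simp
  · intro q hq
    simp [hq]

theorem single_zero_single_zero (f g : R) (n : ℕ) :
    starDeform B (Pi.single 0 f) (Pi.single 0 g) n = B n f g := by
  rw [single_zero_right, Nat.sum_antidiagonal_eq_apply_self_zero]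
  · simp
  · intro q hq
    simp [hq]

variable {B}

theorem sum_antidiagonal_assoc
    (hassoc : ∀ F G H : ℕ → R,
      starDeform B (starDeform B F G) H = starDeform B F (starDeform B G H))
    (f g h : R) (n : ℕ) :
    ∑ p ∈ antidiagonal n, B p.1 (B p.2 f g) h = ∑ p ∈ antidiagonal n, B p.1 f (B p.2 g h) := by
  have := congrFun (hassoc (Pi.single 0 f) (Pi.single 0 g) (Pi.single 0 h)) n
  rw [single_zero_right, single_zero_left] at this
  simpa only [single_zero_single_zero] using this

variable (hB0 : ∀ f g : R, B 0 f g = f * g)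
    (hassoc : ∀ F G H : ℕ → R,
      starDeform B (starDeform B F G) H = starDeform B F (starDeform B G H))
include hB0 hassoc

theorem first_order_cocycle (f g h : R) :
    B 1 f g * h + B 1 (f * g) h = f * B 1 g h + B 1 f (g * h) := by
  have := sum_antidiagonal_assoc hassoc f g h 1
  simp only [Nat.sum_antidiagonal_succ, Nat.antidiagonal_zero, sum_singleton, Nat.reduceAdd,
    hB0] at this
  linear_combination this

theorem second_order_assoc (f g h : R) :
    B 2 f g * h + B 1 (B 1 f g) h + B 2 (f * g) h
      = f * B 2 g h + B 1 f (B 1 g h) + B 2 f (g * h) := by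
  have := sum_antidiagonal_assoc hassoc f g h 2
  simp only [Nat.sum_antidiagonal_succ, Nat.antidiagonal_zero, sum_singleton, Nat.reduceAdd,
    hB0] at this
  linear_combination this

end starDeform

section PoissonBracket

open starDeform

variable {R : Type*} [CommRing R] [Algebra ℝ R]

def poissonBracket (B : ℕ → R →ₗ[ℝ] R →ₗ[ℝ] R) : R →ₗ[ℝ] R →ₗ[ℝ] R := B 1 - (B 1).flip

theorem poissonBracket_apply (B : ℕ → R →ₗ[ℝ] R →ₗ[ℝ] R) (f g : R) :
    poissonBracket B f g = B 1 f g - B 1 g f := rfl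

variable {B : ℕ → R →ₗ[ℝ] R →ₗ[ℝ] R} (hB0 : ∀ f g : R, B 0 f g = f * g)
    (hassoc : ∀ F G H : ℕ → R,
      starDeform B (starDeform B F G) H = starDeform B F (starDeform B G H))
include hB0 hassoc

theorem poissonBracket_leibniz (f g h : R) :
    poissonBracket B f (g * h) = poissonBracket B f g * h + g * poissonBracket B f h := by
  have swap_left : B 1 (f * g) h = B 1 (g * f) h := by rw [mul_comm]
  have swap_right : B 1 g (f * h) = B 1 g (h * f) := by rw [mul_comm]
  simp only [poissonBracket_apply]
  linear_combination first_order_cocycle hB0 hassoc g f h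
    - first_order_cocycle hB0 hassoc f g h - first_order_cocycle hB0 hassoc g h f
    + swap_left + swap_right

theorem poissonBracket_jacobi (f g h : R) :
    poissonBracket B f (poissonBracket B g h) + poissonBracket B g (poissonBracket B h f)
      + poissonBracket B h (poissonBracket B f g) = 0 := by
  have swap_left (x y z : R) : B 2 (x * y) z = B 2 (y * x) z := by rw [mul_comm]
  have swap_right (x y z : R) : B 2 x (y * z) = B 2 x (z * y) := by rw [mul_comm]
  simp only [poissonBracket_apply, map_sub]
  linear_combination second_order_assoc hB0 hassoc f h g - second_order_assoc hB0 hassoc f g h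
    + second_order_assoc hB0 hassoc g f h - second_order_assoc hB0 hassoc g h f
    + second_order_assoc hB0 hassoc h g f - second_order_assoc hB0 hassoc h f g
    - swap_right f g h - swap_left f h g - swap_right g h f
    - swap_left g f h - swap_right h f g - swap_left h g f

end PoissonBracket

/-- if `⋆` is an associative formal deformation of a commutative
ℝ-algebra `R` with `B₀(f,g) = fg`, then `{f,g} := B₁(f,g) - B₁(g,f)` is a Poisson
bracket: ℝ-bilinear (built into the data `B 1`), antisymmetric, satisfying the
Jacobi identity and the Leibniz rule. -/
theorem first_order_term_is_poisson_bracket {R : Type*} [CommRing R] [Algebra ℝ R]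
    (B : ℕ → R →ₗ[ℝ] R →ₗ[ℝ] R)
    (hB0 : ∀ f g : R, B 0 f g = f * g)
    (hassoc : ∀ F G H : ℕ → R,
      starDeform B (starDeform B F G) H = starDeform B F (starDeform B G H)) :
    -- ℝ-bilinearity of the bracket
    (∀ (c : ℝ) (f₁ f₂ g : R),
      (B 1 (c • f₁ + f₂) g - B 1 g (c • f₁ + f₂)) =
        c • (B 1 f₁ g - B 1 g f₁) + (B 1 f₂ g - B 1 g f₂)) ∧
    (∀ (c : ℝ) (f g₁ g₂ : R),
      (B 1 f (c • g₁ + g₂) - B 1 (c • g₁ + g₂) f) =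
        c • (B 1 f g₁ - B 1 g₁ f) + (B 1 f g₂ - B 1 g₂ f)) ∧
    -- antisymmetry
    (∀ f g : R, B 1 f g - B 1 g f = -(B 1 g f - B 1 f g)) ∧
    -- Jacobi identity
    (∀ f g h : R,
      (B 1 f (B 1 g h - B 1 h g) - B 1 (B 1 g h - B 1 h g) f) +
      (B 1 g (B 1 h f - B 1 f h) - B 1 (B 1 h f - B 1 f h) g) +
      (B 1 h (B 1 f g - B 1 g f) - B 1 (B 1 f g - B 1 g f) h) = 0) ∧
    -- Leibniz rule
    (∀ f g h : R,
      B 1 f (g * h) - B 1 (g * h) f =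
        (B 1 f g - B 1 g f) * h + g * (B 1 f h - B 1 h f)) := by
  refine ⟨fun c f₁ f₂ g => ?_, fun c f g₁ g₂ => ?_, fun f g => (neg_sub _ _).symm,
    poissonBracket_jacobi hB0 hassoc, poissonBracket_leibniz hB0 hassoc⟩
  · show poissonBracket B (c • f₁ + f₂) g = c • poissonBracket B f₁ g + poissonBracket B f₂ g
    simp
  · show poissonBracket B f (c • g₁ + g₂) = c • poissonBracket B f g₁ + poissonBracket B f g₂
    simp
end

section
/- Existence of a quantization map: let (C•, D₀) be a cochain complex of ℝ-modules (D₀ : Cⁿ → Cⁿ⁺¹, D₀² = 0), and let dₙ : C• → C•⁺¹ (n ≥ 1) be ℝ-linear maps of degree +1 such that D̄ := D₀ + Σ_{n≥1} εⁿ dₙ, acting ε-linearly on C•[[ε]], satisfies D̄² = 0. Assume that for every ℝ-linear degree +1 map h : C• → C•⁺¹ with h∘D₀ + D₀∘h = 0 there exists an ℝ-linear degree 0 map g : C• → C• with h = g∘D₀ − D₀∘g. Then there exist ℝ-linear degree 0 maps ρₙ : C• → C• (n ≥ 1) such that ρ := id + Σ_{n≥1} εⁿ ρₙ satisfies ρ∘D₀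 = D̄∘ρ on C•[[ε]]. Moreover any such ρ is bijective on C•[[ε]] and restricts to an ℝ[[ε]]-module isomorphism from (ker D₀ ∩ C⁰)[[ε]] onto ker(D̄) ∩ C⁰[[ε]]. -/
section QuantizationMap

variable {C : ℕ → Type*} [∀ n, AddCommGroup (C n)] [∀ n, Module ℝ (C n)]

/-- The action of a series `ρ = Σ εᵃ ρₐ` of degree-`0` maps on series in
`Cⁿ[[ε]]` by convolution. -/
noncomputable def degZeroAct (ρ : ℕ → ∀ n, C n →ₗ[ℝ] C n) (n : ℕ)
    (F : ℕ → C n) : ℕ → C n :=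
  fun m => ∑ p ∈ Finset.HasAntidiagonal.antidiagonal m, ρ p.2 n (F p.1)

/-- The action of a series `D̄ = Σ εᵃ dₐ` of degree-`+1` maps on series in
`Cⁿ[[ε]]` by convolution. -/
noncomputable def degOneAct (dd : ℕ → ∀ n, C n →ₗ[ℝ] C (n + 1)) (n : ℕ)
    (F : ℕ → C n) : ℕ → C (n + 1) :=
  fun m => ∑ p ∈ Finset.HasAntidiagonal.antidiagonal m, dd p.2 n (F p.1)

/-!
Order by order in `ε`, the equation `ρ ∘ D₀ = D̄ ∘ ρ` reads
`ρⱼ ∘ D₀ - D₀ ∘ ρⱼ = Σ_{a + b = j, b ≥ 1} d_b ∘ ρₐ`. Once it holds in orders below `j`, the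
identity `D̄² = 0` (whose `ε⁰` part is `D₀² = 0`) makes the right-hand side anticommute with `D₀`,
so the cohomological hypothesis provides `ρⱼ`. Any `ρ` with `ρ₀ = id` acts unitriangularly on
series, hence bijectively, and `ρ ∘ D₀ = D̄ ∘ ρ` then identifies `ker D₀` with `ker D̄`.
-/

open Finset

theorem Nat.exists_forall_eq_step {α : Type*} [Nonempty α] (step : ℕ → (ℕ → α) → α)
    (hstep : ∀ j f g, (∀ i < j, f i = g i) → step j f = step j g) :
    ∃ f : ℕ → α, ∀ j, f j = step j f := by
  let f : ℕ → α := Nat.strongRec fun j prev =>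
    step j fun i => if h : i < j then prev i h else Classical.arbitrary α
  refine ⟨f, fun j => ?_⟩
  rw [show f j = _ from Nat.strongRec_eq _ j]
  exact hstep j _ _ fun i hi => dif_pos hi

theorem bijective_of_unitriangular {M : Type*} [AddCommGroup M] (T : (ℕ → M) → ℕ → M)
    (L : ℕ → (ℕ → M) → M) (hL : ∀ m F G, (∀ i < m, F i = G i) → L m F = L m G)
    (hT : ∀ F m, T F m = F m + L m F) : Function.Bijective T := by
  refine ⟨fun F G hFG => funext fun m => ?_, fun H => ?_⟩
  · induction m using Nat.strong_induction_on with
    | _ m IH =>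
      have hm := congrFun hFG m
      rwa [hT, hT, hL m F G IH, add_left_inj] at hm
  · obtain ⟨F, hF⟩ := Nat.exists_forall_eq_step (fun m F => H m - L m F)
      fun m F G h => by rw [hL m F G h]
    exact ⟨F, funext fun m => by rw [hT, hF m, sub_add_cancel]⟩

theorem fst_lt_of_mem_erase_antidiagonal {m : ℕ} {p : ℕ × ℕ}
    (hp : p ∈ (antidiagonal m).erase (m, 0)) : p.1 < m := by
  obtain ⟨hne, hsum⟩ := mem_erase.mp hp
  rw [HasAntidiagonal.mem_antidiagonal] at hsum
  rcases p with ⟨a, b⟩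
  grind

theorem sum_antidiagonal_eq_add_sum_erase {M : Type*} [AddCommMonoid M] (m : ℕ)
    (f : ℕ × ℕ → M) :
    ∑ p ∈ antidiagonal m, f p = f (m, 0) + ∑ p ∈ (antidiagonal m).erase (m, 0), f p :=
  (add_sum_erase _ _ (by simp)).symm

theorem sum_antidiagonal_antidiagonal_assoc {M : Type*} [AddCommMonoid M] (f : ℕ → ℕ → ℕ → M)
    (m : ℕ) :
    ∑ p ∈ antidiagonal m, ∑ q ∈ antidiagonal p.1, f q.1 q.2 p.2
      = ∑ p ∈ antidiagonal m, ∑ q ∈ antidiagonal p.2, f p.1 q.1 q.2 := by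
  simp only [sum_sigma']
  apply sum_nbij' (fun ⟨⟨_, c⟩, ⟨a, b⟩⟩ ↦ ⟨(a, b + c), (b, c)⟩)
    (fun ⟨⟨a, _⟩, ⟨b, c⟩⟩ ↦ ⟨(a + b, c), (a, b)⟩) <;> aesop (add simp [add_assoc])

section Series

variable (dd : ℕ → ∀ n, C n →ₗ[ℝ] C (n + 1)) (ρ : ℕ → ∀ n, C n →ₗ[ℝ] C n)

noncomputable def quantizationObstruction (j n : ℕ) : C n →ₗ[ℝ] C (n + 1) :=
  ∑ p ∈ (antidiagonal j).erase (j, 0), (dd p.2 n).comp (ρ p.1 n)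

variable {ρ} in
theorem quantizationObstruction_congr {ρ' : ℕ → ∀ n, C n →ₗ[ℝ] C n} {j : ℕ}
    (h : ∀ i < j, ρ i = ρ' i) :
    quantizationObstruction dd ρ j = quantizationObstruction dd ρ' j :=
  funext fun _ => sum_congr rfl fun p hp => by rw [h p.1 (fst_lt_of_mem_erase_antidiagonal hp)]

theorem degOneAct_apply_zero (n : ℕ) (F : ℕ → C n) : degOneAct dd n F 0 = dd 0 n (F 0) := by
  simp [degOneAct]

theorem degOneAct_apply_eq_add_quantizationObstruction (j n : ℕ) (x : C n) :
    degOneAct dd n (fun a => ρ a n x) j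
      = dd 0 n (ρ j n x) + quantizationObstruction dd ρ j n x := by
  simp only [degOneAct, quantizationObstruction, LinearMap.sum_apply, LinearMap.comp_apply]
  exact sum_antidiagonal_eq_add_sum_erase j _

theorem quantizationObstruction_anticomm
    (hsq : ∀ n (F : ℕ → C n), degOneAct dd (n + 1) (degOneAct dd n F) = 0) {j : ℕ}
    (hρ : ∀ a < j, ∀ n (x : C n), ρ a (n + 1) (dd 0 n x) = degOneAct dd n (fun b => ρ b n x) a)
    (n : ℕ) (x : C n) :
    quantizationObstruction dd ρ j (n + 1) (dd 0 n x)
      + dd 0 (n + 1) (quantizationObstruction dd ρ j n x) = 0 := by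
  have hD0sq : dd 0 (n + 1) (dd 0 n (ρ j n x)) = 0 := by
    simpa [degOneAct_apply_zero] using congrFun (hsq n fun _ => ρ j n x) 0
  have hlower : quantizationObstruction dd ρ j (n + 1) (dd 0 n x)
      = ∑ p ∈ (antidiagonal j).erase (j, 0),
          dd p.2 (n + 1) (degOneAct dd n (fun b => ρ b n x) p.1) := by
    simp only [quantizationObstruction, LinearMap.sum_apply, LinearMap.comp_apply]
    exact sum_congr rfl fun p hp => by rw [hρ p.1 (fst_lt_of_mem_erase_antidiagonal hp)]
  calc _ = degOneAct dd (n + 1) (degOneAct dd n fun b => ρ b n x) j := by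
        rw [degOneAct, sum_antidiagonal_eq_add_sum_erase, ← hlower]
        dsimp only
        rw [degOneAct_apply_eq_add_quantizationObstruction, map_add, hD0sq, zero_add]
        exact add_comm _ _
    _ = 0 := congrFun (hsq n _) j

theorem exists_coeff_intertwining
    (hsq : ∀ n (F : ℕ → C n), degOneAct dd (n + 1) (degOneAct dd n F) = 0)
    (hexact : ∀ h : ∀ n, C n →ₗ[ℝ] C (n + 1),
      (∀ n (x : C n), h (n + 1) (dd 0 n x) + dd 0 (n + 1) (h n x) = 0) →
      ∃ g : ∀ n, C n →ₗ[ℝ] C n, ∀ n (x : C n), h n x = g (n + 1) (dd 0 n x) - dd 0 n (g n x)) :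
    ∃ ρ : ℕ → ∀ n, C n →ₗ[ℝ] C n, ρ 0 = (fun _ => LinearMap.id) ∧
      ∀ j n (x : C n), ρ j (n + 1) (dd 0 n x) = degOneAct dd n (fun a => ρ a n x) j := by
  -- a `g` for every `h`, so that the recursion below may apply it before knowing `h` is a cocycle
  choose G hG using fun h => (em _).elim (fun hh => (hexact h hh).imp fun g hg _ => hg)
    fun hh => ⟨0, fun h' => absurd h' hh⟩
  obtain ⟨ρ, hρ⟩ := Nat.exists_forall_eq_step
    (fun j ρ => if j = 0 then fun _ => LinearMap.id else G (quantizationObstruction dd ρ j))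
    fun j _ _ h => by rw [quantizationObstruction_congr dd h]
  refine ⟨ρ, hρ 0, fun j => ?_⟩
  induction j using Nat.strong_induction_on with
  | _ j IH =>
    intro n x
    rw [degOneAct_apply_eq_add_quantizationObstruction]
    rcases eq_or_ne j 0 with rfl | hj
    · simp [hρ 0, quantizationObstruction]
    · have hρj : ρ j = G (quantizationObstruction dd ρ j) := by rw [hρ j, if_neg hj]
      rw [hG _ (quantizationObstruction_anticomm dd ρ hsq IH) n x, hρj]
      abel

theorem degZeroAct_comp_eq_degOneAct_of_coeff
    (h : ∀ j n (x : C n), ρ j (n + 1) (dd 0 n x) = degOneAct dd n (fun a => ρ a n x) j)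
    (n : ℕ) (F : ℕ → C n) :
    degZeroAct ρ (n + 1) (fun m => dd 0 n (F m)) = degOneAct dd n (degZeroAct ρ n F) := by
  funext m
  simp only [degZeroAct, degOneAct, h, map_sum]
  exact (sum_antidiagonal_antidiagonal_assoc (fun a b c => dd c n (ρ b n (F a))) m).symm

theorem degZeroAct_zero (n : ℕ) : degZeroAct ρ n 0 = 0 :=
  funext fun m => by simp [degZeroAct]

theorem degZeroAct_bijective (hρ0 : ρ 0 = fun _ => LinearMap.id) (n : ℕ) :
    Function.Bijective (degZeroAct ρ n) :=
  bijective_of_unitriangular _ (fun m F => ∑ p ∈ (antidiagonal m).erase (m, 0), ρ p.2 n (F p.1))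
    (fun m F G h => sum_congr rfl fun p hp => by rw [h p.1 (fst_lt_of_mem_erase_antidiagonal hp)])
    fun F m => by
      rw [degZeroAct, sum_antidiagonal_eq_add_sum_erase, hρ0]
      rfl

theorem degOneAct_degZeroAct_eq_zero_iff (hρ0 : ρ 0 = fun _ => LinearMap.id) {n : ℕ}
    {F : ℕ → C n}
    (hcomm : degZeroAct ρ (n + 1) (fun m => dd 0 n (F m)) = degOneAct dd n (degZeroAct ρ n F)) :
    degOneAct dd n (degZeroAct ρ n F) = 0 ↔ ∀ m, dd 0 n (F m) = 0 := by
  rw [← hcomm, ← degZeroAct_zero ρ (n + 1), (degZeroAct_bijective ρ hρ0 (n + 1)).injective.eq_iff,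
    funext_iff]
  rfl

end Series

theorem quantization_map_exists_general
    (D0 : ∀ n, C n →ₗ[ℝ] C (n + 1))
    (dd : ℕ → ∀ n, C n →ₗ[ℝ] C (n + 1))
    (hdd0 : dd 0 = D0)
    (hDbarSq : ∀ (n : ℕ) (F : ℕ → C n),
      degOneAct dd (n + 1) (degOneAct dd n F) = 0)
    (hexact : ∀ h : ∀ n, C n →ₗ[ℝ] C (n + 1),
      (∀ n (x : C n), h (n + 1) (D0 n x) + D0 (n + 1) (h n x) = 0) →
      ∃ g : ∀ n, C n →ₗ[ℝ] C n,
        ∀ n (x : C n), h n x = g (n + 1) (D0 n x) - D0 n (g n x)) :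
    (∃ ρ : ℕ → ∀ n, C n →ₗ[ℝ] C n,
      ρ 0 = (fun n => LinearMap.id) ∧
      ∀ (n : ℕ) (F : ℕ → C n),
        degZeroAct ρ (n + 1) (fun m => D0 n (F m)) = degOneAct dd n (degZeroAct ρ n F)) ∧
    (∀ ρ : ℕ → ∀ n, C n →ₗ[ℝ] C n,
      ρ 0 = (fun n => LinearMap.id) →
      (∀ (n : ℕ) (F : ℕ → C n),
        degZeroAct ρ (n + 1) (fun m => D0 n (F m)) = degOneAct dd n (degZeroAct ρ n F)) →
      (∀ n : ℕ, Function.Bijective (degZeroAct ρ n)) ∧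
      (∀ F : ℕ → C 0, (∀ m, D0 0 (F m) = 0) ↔ degOneAct dd 0 (degZeroAct ρ 0 F) = 0)) := by
  subst hdd0
  obtain ⟨ρ, hρ0, hcoeff⟩ := exists_coeff_intertwining dd hDbarSq hexact
  refine ⟨⟨ρ, hρ0, degZeroAct_comp_eq_degOneAct_of_coeff dd ρ hcoeff⟩, fun ρ hρ0 hcomm => ?_⟩
  exact ⟨degZeroAct_bijective ρ hρ0,
    fun F => (degOneAct_degZeroAct_eq_zero_iff dd ρ hρ0 (hcomm 0 F)).symm⟩

/-- existence of a quantization map. Given a cochain complex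
`(C•, D₀)` of ℝ-modules and a flat deformation `D̄ = D₀ + Σ_{n≥1} εⁿ dₙ` (`D̄² = 0`),
under the stated degree-`1` cohomological triviality assumption there exist
degree-`0` maps `ρₙ` with `ρ = id + Σ_{n≥1} εⁿρₙ` satisfying `ρ∘D₀ = D̄∘ρ`; any
such `ρ` is bijective on `C•[[ε]]` and restricts to an isomorphism of
`(ker D₀ ∩ C⁰)[[ε]]` onto `ker D̄ ∩ C⁰[[ε]]`. -/
theorem quantization_map_exists
    (D0 : ∀ n, C n →ₗ[ℝ] C (n + 1))
    (hD0sq : ∀ n (x : C n), D0 (n + 1) (D0 n x) = 0)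
    (dd : ℕ → ∀ n, C n →ₗ[ℝ] C (n + 1))
    (hdd0 : dd 0 = D0)
    (hDbarSq : ∀ (n : ℕ) (F : ℕ → C n),
      degOneAct dd (n + 1) (degOneAct dd n F) = 0)
    (hexact : ∀ h : ∀ n, C n →ₗ[ℝ] C (n + 1),
      (∀ n (x : C n), h (n + 1) (D0 n x) + D0 (n + 1) (h n x) = 0) →
      ∃ g : ∀ n, C n →ₗ[ℝ] C n,
        ∀ n (x : C n), h n x = g (n + 1) (D0 n x) - D0 n (g n x)) :
    (∃ ρ : ℕ → ∀ n, C n →ₗ[ℝ] C n,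
      ρ 0 = (fun n => LinearMap.id) ∧
      ∀ (n : ℕ) (F : ℕ → C n),
        degZeroAct ρ (n + 1) (fun m => D0 n (F m)) = degOneAct dd n (degZeroAct ρ n F)) ∧
    (∀ ρ : ℕ → ∀ n, C n →ₗ[ℝ] C n,
      ρ 0 = (fun n => LinearMap.id) →
      (∀ (n : ℕ) (F : ℕ → C n),
        degZeroAct ρ (n + 1) (fun m => D0 n (F m)) = degOneAct dd n (degZeroAct ρ n F)) →
      (∀ n : ℕ, Function.Bijective (degZeroAct ρ n)) ∧
      (∀ F : ℕ → C 0, (∀ m, D0 0 (F m) = 0) ↔ degOneAct dd 0 (degZeroAct ρ 0 F) = 0)) :=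
  quantization_map_exists_general D0 dd hdd0 hDbarSq hexact

end QuantizationMap
end

section
/- Existence of the Fedosov one-form γ: let B = ⊕_{n≥0} Bₙ be a graded ℝ-vector space and A = B[[ε]] an associative graded ℝ[[ε]]-algebra whose product ⋆ is ℝ[[ε]]-bilinear, given by convolution of ℝ-bilinear degree-adding maps on B. Let D = D₀ + Σ_{n≥1} εⁿ Dₙ (each Dₙ : B → B of degree +1, extended ε-linearly) be an odd derivation of degree +1 of (A, ⋆), and let F = Σ_{n≥1} εⁿ Fₙ with Fₙ ∈ B₂ be such that D²a = F⋆a − a⋆F for all a ∈ A and DF = 0. (Then automatically D₀² = 0 on B.) Assume that every b ∈ B₂ with D₀b = 0 is of the form b = D₀c for some c ∈ B₁. Then there exists γ = Σ_{n≥1} εⁿ γₙ with γₙ ∈ B₁ such that F + Dγ + γ⋆γ = 0; consequently D̄ := D + [γ,·]⋆ satisfies D̄² = 0. -/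
/-!
The one-form is built order by order in `ε`. Write `Ω(γ) = F + Dγ + γ⋆γ`. For `γ` of degree 1, the
derivation rule, associativity, `D² = [F, ·]` and `DF = 0` give the Bianchi identity
`DΩ = Ω⋆γ - γ⋆Ω`. So if `γ₀ = 0` and `Ω(γ)` vanishes below order `n`, comparing `εⁿ`-coefficients
shows that `Ωₙ ∈ B₂` is `D₀`-closed, hence `Ωₙ = D₀ c` with `c ∈ B₁`, and `γ - εⁿ c` has
curvature vanishing below order `n + 1` (the correction only touches orders `≥ n`). These
corrections converge `ε`-adically to a flat `γ`. The same identities give `D̄² = [Ω(γ), ·] = 0`,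
and `D₀² = 0` is the `ε⁰`-coefficient of `D² = [F, ·]`, since `F₀ = 0`.
-/

section Fedosov

variable {B : Type*} [AddCommGroup B] [Module ℝ B]

/-- The star product on `A = B[[ε]]` (series encoded by their coefficients
`ℕ → B`) given by convolution of a family of ℝ-bilinear maps `mₖ`: the
coefficient of `εⁿ` in `F ⋆ G` is `Σ_{a+b+k=n} mₖ(F_a, G_b)`. -/
noncomputable def starConv (m : ℕ → B →ₗ[ℝ] B →ₗ[ℝ] B) (F G : ℕ → B) : ℕ → B :=
  fun n => ∑ p ∈ Finset.HasAntidiagonal.antidiagonal n, ∑ q ∈ Finset.HasAntidiagonal.antidiagonal p.2,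
    m p.1 (F q.1) (G q.2)

/-- The operator `D = Σ εᵃ Dₐ` on series, acting by convolution. -/
noncomputable def opConv (Dops : ℕ → B →ₗ[ℝ] B) (F : ℕ → B) : ℕ → B :=
  fun n => ∑ p ∈ Finset.HasAntidiagonal.antidiagonal n, Dops p.2 (F p.1)

/-- `F ∈ εⁿ B[[ε]]`. -/
def VanishesBelow {M : Type*} [Zero M] (F : ℕ → M) (n : ℕ) : Prop := ∀ k < n, F k = 0

section VanishesBelow

variable {M : Type*}

lemma vanishesBelow_zero [Zero M] (F : ℕ → M) : VanishesBelow F 0 :=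
  fun _ hk => absurd hk (Nat.not_lt_zero _)

lemma vanishesBelow_single [Zero M] (n : ℕ) (c : M) : VanishesBelow (Pi.single n c) n :=
  fun _ hk => Pi.single_eq_of_ne hk.ne _

lemma VanishesBelow.mono [Zero M] {F : ℕ → M} {a b : ℕ} (hF : VanishesBelow F a) (hba : b ≤ a) :
    VanishesBelow F b :=
  fun k hk => hF k (by omega)

variable [AddGroup M] {F G : ℕ → M} {a : ℕ}

lemma VanishesBelow.add (hF : VanishesBelow F a) (hG : VanishesBelow G a) :
    VanishesBelow (F + G) a :=
  fun k hk => by simp [hF k hk, hG k hk]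

lemma VanishesBelow.sub (hF : VanishesBelow F a) (hG : VanishesBelow G a) :
    VanishesBelow (F - G) a :=
  fun k hk => by simp [hF k hk, hG k hk]

/-- An `ε`-adically convergent sequence of series has the diagonal sequence as its limit. -/
lemma vanishesBelow_diag_sub {g : ℕ → ℕ → M}
    (hg : ∀ N, VanishesBelow (g (N + 1) - g N) (N + 1)) (N : ℕ) :
    VanishesBelow ((fun n => g n n) - g N) (N + 1) := by
  have hstable : ∀ k j, k ≤ j → g j k = g k k := by
    intro k j hkj
    induction j, hkj using Nat.le_induction with
    | base => rfl
    | succ j hkj ih => rw [← ih, ← sub_eq_zero]; exact hg j k (by omega)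
  intro k hk
  simp [hstable k N (by omega)]

end VanishesBelow

section Series

variable (m : ℕ → B →ₗ[ℝ] B →ₗ[ℝ] B) (Dops : ℕ → B →ₗ[ℝ] B)

lemma starConv_add_left (F G H : ℕ → B) :
    starConv m (F + G) H = starConv m F H + starConv m G H := by
  funext n; simp [starConv, Finset.sum_add_distrib]

lemma starConv_add_right (F G H : ℕ → B) :
    starConv m F (G + H) = starConv m F G + starConv m F H := by
  funext n; simp [starConv, Finset.sum_add_distrib]

lemma starConv_sub_left (F G H : ℕ → B) :
    starConv m (F - G) H = starConv m F H - starConv m G H := by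
  funext n; simp [starConv, Finset.sum_sub_distrib]

lemma starConv_sub_right (F G H : ℕ → B) :
    starConv m F (G - H) = starConv m F G - starConv m F H := by
  funext n; simp [starConv, Finset.sum_sub_distrib]

lemma starConv_smul_left (c : ℝ) (F G : ℕ → B) :
    starConv m (c • F) G = c • starConv m F G := by
  funext n; simp [starConv, Finset.smul_sum]

lemma starConv_smul_right (c : ℝ) (F G : ℕ → B) :
    starConv m F (c • G) = c • starConv m F G := by
  funext n; simp [starConv, Finset.smul_sum]

lemma opConv_add (F G : ℕ → B) : opConv Dops (F + G) = opConv Dops F + opConv Dops G := by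
  funext n; simp [opConv, Finset.sum_add_distrib]

lemma opConv_sub (F G : ℕ → B) : opConv Dops (F - G) = opConv Dops F - opConv Dops G := by
  funext n; simp [opConv, Finset.sum_sub_distrib]

lemma opConv_smul (c : ℝ) (F : ℕ → B) : opConv Dops (c • F) = c • opConv Dops F := by
  funext n; simp [opConv, Finset.smul_sum]

lemma starConv_mem {ℬ : ℕ → Submodule ℝ B}
    (hmdeg : ∀ (k p q : ℕ), ∀ x ∈ ℬ p, ∀ y ∈ ℬ q, m k x y ∈ ℬ (p + q))
    {p q : ℕ} {F G : ℕ → B} (hF : ∀ n, F n ∈ ℬ p) (hG : ∀ n, G n ∈ ℬ q) (n : ℕ) :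
    starConv m F G n ∈ ℬ (p + q) :=
  Submodule.sum_mem _ fun _ _ => Submodule.sum_mem _ fun j _ =>
    hmdeg _ _ _ _ (hF j.1) _ (hG j.2)

lemma opConv_mem {ℬ : ℕ → Submodule ℝ B}
    (hDdeg : ∀ (n p : ℕ), ∀ x ∈ ℬ p, Dops n x ∈ ℬ (p + 1))
    {p : ℕ} {F : ℕ → B} (hF : ∀ n, F n ∈ ℬ p) (n : ℕ) :
    opConv Dops F n ∈ ℬ (p + 1) :=
  Submodule.sum_mem _ fun i _ => hDdeg _ _ _ (hF i.1)

variable {F G : ℕ → B} {a b : ℕ}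

lemma VanishesBelow.starConv (hF : VanishesBelow F a) (hG : VanishesBelow G b) :
    VanishesBelow (starConv m F G) (a + b) := by
  intro n hn
  refine Finset.sum_eq_zero fun i hi => Finset.sum_eq_zero fun j hj => ?_
  rw [Finset.HasAntidiagonal.mem_antidiagonal] at hi hj
  rcases lt_or_ge j.1 a with h | h
  · simp [hF _ h]
  · simp [hG j.2 (by omega)]

lemma VanishesBelow.opConv (hF : VanishesBelow F a) : VanishesBelow (opConv Dops F) a := by
  intro n hn
  refine Finset.sum_eq_zero fun i hi => ?_
  rw [Finset.HasAntidiagonal.mem_antidiagonal] at hi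
  simp [hF i.1 (by omega)]

lemma VanishesBelow.opConv_apply (hF : VanishesBelow F a) :
    _root_.opConv Dops F a = Dops 0 (F a) := by
  rw [_root_.opConv, Finset.Nat.sum_antidiagonal_eq_sum_range_succ_mk, Finset.sum_range_succ,
    Finset.sum_eq_zero fun k hk => by simp [hF k (Finset.mem_range.mp hk)]]
  simp

noncomputable def fedosovCurvature (Fser γ : ℕ → B) : ℕ → B :=
  Fser + opConv Dops γ + starConv m γ γ

/-- `D + [γ, ·]⋆` on series homogeneous of degree `p`. -/
noncomputable def twistedDiff (γ : ℕ → B) (p : ℕ) (a : ℕ → B) : ℕ → B :=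
  opConv Dops a + starConv m γ a - ((-1 : ℝ) ^ p) • starConv m a γ

lemma fedosovCurvature_mem {ℬ : ℕ → Submodule ℝ B}
    (hmdeg : ∀ (k p q : ℕ), ∀ x ∈ ℬ p, ∀ y ∈ ℬ q, m k x y ∈ ℬ (p + q))
    (hDdeg : ∀ (n p : ℕ), ∀ x ∈ ℬ p, Dops n x ∈ ℬ (p + 1))
    {Fser : ℕ → B} (hFdeg : ∀ n, Fser n ∈ ℬ 2) {γ : ℕ → B} (hγ : ∀ n, γ n ∈ ℬ 1) (n : ℕ) :
    fedosovCurvature m Dops Fser γ n ∈ ℬ 2 :=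
  add_mem (add_mem (hFdeg n) (opConv_mem Dops hDdeg hγ n)) (starConv_mem m hmdeg hγ hγ n)

lemma fedosovCurvature_add (Fser γ s : ℕ → B) :
    fedosovCurvature m Dops Fser (γ + s) = fedosovCurvature m Dops Fser γ +
      (opConv Dops s + (starConv m γ s + starConv m s γ + starConv m s s)) := by
  simp only [fedosovCurvature, opConv_add, starConv_add_left, starConv_add_right]
  abel

lemma vanishesBelow_fedosovCurvature_add_sub {Fser γ s : ℕ → B} {k : ℕ}
    (hs : VanishesBelow s k) :
    VanishesBelow
      (fedosovCurvature m Dops Fser (γ + s) - fedosovCurvature m Dops Fser γ) k := by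
  rw [fedosovCurvature_add, add_sub_cancel_left]
  have hγs : VanishesBelow (starConv m γ s) k := by
    simpa using (vanishesBelow_zero γ).starConv m hs
  have hsγ : VanishesBelow (starConv m s γ) k := hs.starConv m (vanishesBelow_zero γ)
  have hss := (hs.starConv m hs).mono (Nat.le_add_right k k)
  exact (hs.opConv Dops).add ((hγs.add hsγ).add hss)

lemma vanishesBelow_fedosovCurvature_add_sub_opConv {Fser γ s : ℕ → B} {k : ℕ}
    (hγ : VanishesBelow γ 1) (hs : VanishesBelow s k) (hk : 1 ≤ k) :
    VanishesBelow (fedosovCurvature m Dops Fser (γ + s) - fedosovCurvature m Dops Fser γ -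
      opConv Dops s) (k + 1) := by
  rw [fedosovCurvature_add, add_sub_cancel_left, add_sub_cancel_left]
  have hγs : VanishesBelow (starConv m γ s) (k + 1) := by
    simpa [add_comm] using hγ.starConv m hs
  have hsγ : VanishesBelow (starConv m s γ) (k + 1) := hs.starConv m hγ
  have hss := (hs.starConv m hs).mono (by omega : k + 1 ≤ k + k)
  exact (hγs.add hsγ).add hss

lemma opConv_starConv_of_mem_one {ℬ : ℕ → Submodule ℝ B}
    (hDderiv : ∀ (p : ℕ) (F G : ℕ → B), (∀ n, F n ∈ ℬ p) →
      opConv Dops (starConv m F G) =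
        starConv m (opConv Dops F) G + ((-1 : ℝ) ^ p) • starConv m F (opConv Dops G))
    {γ : ℕ → B} (hγ : ∀ n, γ n ∈ ℬ 1) (a : ℕ → B) :
    opConv Dops (starConv m γ a) = starConv m (opConv Dops γ) a - starConv m γ (opConv Dops a) := by
  rw [hDderiv 1 γ a hγ, pow_one, neg_one_smul, sub_eq_add_neg]

lemma opConv_fedosovCurvature
    (hassoc : ∀ F G H : ℕ → B,
      starConv m (starConv m F G) H = starConv m F (starConv m G H))
    {ℬ : ℕ → Submodule ℝ B}
    (hDderiv : ∀ (p : ℕ) (F G : ℕ → B), (∀ n, F n ∈ ℬ p) →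
      opConv Dops (starConv m F G) =
        starConv m (opConv Dops F) G + ((-1 : ℝ) ^ p) • starConv m F (opConv Dops G))
    {Fser : ℕ → B}
    (hcurv : ∀ a : ℕ → B,
      opConv Dops (opConv Dops a) = starConv m Fser a - starConv m a Fser)
    (hBianchi : opConv Dops Fser = 0) {γ : ℕ → B} (hγ : ∀ n, γ n ∈ ℬ 1) :
    opConv Dops (fedosovCurvature m Dops Fser γ) =
      starConv m (fedosovCurvature m Dops Fser γ) γ -
        starConv m γ (fedosovCurvature m Dops Fser γ) := by
  simp only [fedosovCurvature, opConv_add, starConv_add_left, starConv_add_right, hBianchi, hcurv,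
    opConv_starConv_of_mem_one m Dops hDderiv hγ, hassoc]
  abel

lemma twistedDiff_twistedDiff
    (hassoc : ∀ F G H : ℕ → B,
      starConv m (starConv m F G) H = starConv m F (starConv m G H))
    {ℬ : ℕ → Submodule ℝ B}
    (hDderiv : ∀ (p : ℕ) (F G : ℕ → B), (∀ n, F n ∈ ℬ p) →
      opConv Dops (starConv m F G) =
        starConv m (opConv Dops F) G + ((-1 : ℝ) ^ p) • starConv m F (opConv Dops G))
    {Fser : ℕ → B}
    (hcurv : ∀ a : ℕ → B,
      opConv Dops (opConv Dops a) = starConv m Fser a - starConv m a Fser)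
    {γ : ℕ → B} (hγ : ∀ n, γ n ∈ ℬ 1) {p : ℕ} {a : ℕ → B} (ha : ∀ n, a n ∈ ℬ p) :
    twistedDiff m Dops γ (p + 1) (twistedDiff m Dops γ p a) =
      starConv m (fedosovCurvature m Dops Fser γ) a -
        starConv m a (fedosovCurvature m Dops Fser γ) := by
  have hsign : ((-1 : ℝ) ^ p) ^ 2 = 1 := by rw [← pow_mul, pow_mul']; simp
  simp only [twistedDiff, fedosovCurvature, opConv_add, opConv_sub, opConv_smul,
    starConv_add_left, starConv_add_right, starConv_sub_left, starConv_sub_right,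
    starConv_smul_left, starConv_smul_right, hcurv, opConv_starConv_of_mem_one m Dops hDderiv hγ,
    hDderiv p a γ ha, hassoc]
  linear_combination (norm := module)
    hsign • -(starConv m a (opConv Dops γ) + starConv m a (starConv m γ γ))

lemma VanishesBelow.dops_zero_apply_eq_zero {Ω γ : ℕ → B} {n : ℕ} (hΩn : VanishesBelow Ω n)
    (hΩ : _root_.opConv Dops Ω = _root_.starConv m Ω γ - _root_.starConv m γ Ω)
    (hγ : VanishesBelow γ 1) : Dops 0 (Ω n) = 0 := by
  have hcomm : VanishesBelow (_root_.starConv m Ω γ - _root_.starConv m γ Ω) (n + 1) :=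
    (hΩn.starConv m hγ).sub (by simpa [add_comm] using hγ.starConv m hΩn)
  rw [← hΩn.opConv_apply Dops, hΩ]
  exact hcomm n n.lt_succ_self

def IsFlatBelow (ℬ : ℕ → Submodule ℝ B) (Fser : ℕ → B) (n : ℕ) (γ : ℕ → B) : Prop :=
  VanishesBelow γ 1 ∧ (∀ k, γ k ∈ ℬ 1) ∧ VanishesBelow (fedosovCurvature m Dops Fser γ) n

lemma IsFlatBelow.exists_succ {ℬ : ℕ → Submodule ℝ B}
    (hmdeg : ∀ (k p q : ℕ), ∀ x ∈ ℬ p, ∀ y ∈ ℬ q, m k x y ∈ ℬ (p + q))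
    (hassoc : ∀ F G H : ℕ → B,
      starConv m (starConv m F G) H = starConv m F (starConv m G H))
    (hDdeg : ∀ (n p : ℕ), ∀ x ∈ ℬ p, Dops n x ∈ ℬ (p + 1))
    (hDderiv : ∀ (p : ℕ) (F G : ℕ → B), (∀ n, F n ∈ ℬ p) →
      opConv Dops (starConv m F G) =
        starConv m (opConv Dops F) G + ((-1 : ℝ) ^ p) • starConv m F (opConv Dops G))
    {Fser : ℕ → B} (hFdeg : ∀ n, Fser n ∈ ℬ 2)
    (hcurv : ∀ a : ℕ → B,
      opConv Dops (opConv Dops a) = starConv m Fser a - starConv m a Fser)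
    (hBianchi : opConv Dops Fser = 0)
    (hexact : ∀ b ∈ ℬ 2, Dops 0 b = 0 → ∃ c ∈ ℬ 1, b = Dops 0 c)
    {N : ℕ} {f : ℕ → B} (hf : IsFlatBelow m Dops ℬ Fser (N + 1) f) :
    ∃ f' : ℕ → B, IsFlatBelow m Dops ℬ Fser (N + 2) f' ∧ VanishesBelow (f' - f) (N + 1) := by
  obtain ⟨hf₀, hf₁, hΩ⟩ := hf
  have hclosed : Dops 0 (fedosovCurvature m Dops Fser f (N + 1)) = 0 :=
    hΩ.dops_zero_apply_eq_zero m Dops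
      (opConv_fedosovCurvature m Dops hassoc hDderiv hcurv hBianchi hf₁) hf₀
  obtain ⟨c, hc, hΩc⟩ := hexact _ (fedosovCurvature_mem m Dops hmdeg hDdeg hFdeg hf₁ _) hclosed
  have hs := vanishesBelow_single (N + 1) (-c)
  refine ⟨f + Pi.single (N + 1) (-c), ⟨hf₀.add (hs.mono (by omega)), fun n => ?_, ?_⟩,
    by simpa using hs⟩
  · rcases eq_or_ne n (N + 1) with rfl | hn
    · simpa using add_mem (hf₁ _) (neg_mem hc)
    · simpa [hn] using hf₁ n
  · have hlead : VanishesBelow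
        (fedosovCurvature m Dops Fser f + opConv Dops (Pi.single (N + 1) (-c))) (N + 2) := by
      intro k hk
      rcases Nat.lt_succ_iff_lt_or_eq.mp hk with hk | rfl
      · simp [hΩ k hk, hs.opConv Dops k hk]
      · rw [Pi.add_apply, hs.opConv_apply, hΩc]
        simp
    simpa using
      (vanishesBelow_fedosovCurvature_add_sub_opConv m Dops (Fser := Fser) hf₀ hs (by omega)).add
        hlead

lemma exists_fedosovCurvature_eq_zero {ℬ : ℕ → Submodule ℝ B}
    (hmdeg : ∀ (k p q : ℕ), ∀ x ∈ ℬ p, ∀ y ∈ ℬ q, m k x y ∈ ℬ (p + q))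
    (hassoc : ∀ F G H : ℕ → B,
      starConv m (starConv m F G) H = starConv m F (starConv m G H))
    (hDdeg : ∀ (n p : ℕ), ∀ x ∈ ℬ p, Dops n x ∈ ℬ (p + 1))
    (hDderiv : ∀ (p : ℕ) (F G : ℕ → B), (∀ n, F n ∈ ℬ p) →
      opConv Dops (starConv m F G) =
        starConv m (opConv Dops F) G + ((-1 : ℝ) ^ p) • starConv m F (opConv Dops G))
    {Fser : ℕ → B} (hF0 : Fser 0 = 0) (hFdeg : ∀ n, Fser n ∈ ℬ 2)
    (hcurv : ∀ a : ℕ → B,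
      opConv Dops (opConv Dops a) = starConv m Fser a - starConv m a Fser)
    (hBianchi : opConv Dops Fser = 0)
    (hexact : ∀ b ∈ ℬ 2, Dops 0 b = 0 → ∃ c ∈ ℬ 1, b = Dops 0 c) :
    ∃ γ : ℕ → B, VanishesBelow γ 1 ∧ (∀ n, γ n ∈ ℬ 1) ∧ fedosovCurvature m Dops Fser γ = 0 := by
  choose! next hnext using fun N f (hf : IsFlatBelow m Dops ℬ Fser (N + 1) f) =>
    hf.exists_succ m Dops hmdeg hassoc hDdeg hDderiv hFdeg hcurv hBianchi hexact
  let g : ℕ → ℕ → B := fun N => Nat.rec 0 next N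
  have hg : ∀ N, IsFlatBelow m Dops ℬ Fser (N + 1) (g N) := by
    intro N
    induction N with
    | zero =>
      refine ⟨fun _ _ => rfl, fun _ => zero_mem _, fun k hk => ?_⟩
      simp [Nat.lt_one_iff.mp hk, g, fedosovCurvature, opConv, starConv, hF0]
    | succ N ih => exact (hnext N (g N) ih).1
  have hlim := vanishesBelow_diag_sub (g := g) fun N => (hnext N (g N) (hg N)).2
  refine ⟨fun n => g n n, fun k hk => (hg k).1 k hk, fun n => (hg n).2.1 n, funext fun N => ?_⟩
  have hdiff := vanishesBelow_fedosovCurvature_add_sub m Dops (Fser := Fser) (γ := g N) (hlim N) N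
    N.lt_succ_self
  rwa [add_sub_cancel, Pi.sub_apply, (hg N).2.2 N N.lt_succ_self, sub_zero] at hdiff

lemma dops_zero_dops_zero_apply {Fser : ℕ → B} (hF0 : Fser 0 = 0)
    (hcurv : ∀ a : ℕ → B,
      opConv Dops (opConv Dops a) = starConv m Fser a - starConv m a Fser) (x : B) :
    Dops 0 (Dops 0 x) = 0 := by
  simpa [opConv, starConv, hF0] using congrFun (hcurv fun _ => x) 0

end Series

/-- existence of the Fedosov one-form `γ`. Let `A = B[[ε]]` be an
associative graded algebra over `ℝ[[ε]]` (grading `ℬ`, product `⋆` by convolution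
of degree-adding bilinear maps `mₖ`), `D = D₀ + Σ_{n≥1} εⁿDₙ` an odd derivation of
degree `+1`, and `F = Σ_{n≥1} εⁿFₙ`, `Fₙ ∈ B₂`, with `D²a = F⋆a - a⋆F` and
`DF = 0`. Then automatically `D₀² = 0` on `B`; and if every `D₀`-closed element of
`B₂` is `D₀ c` for some `c ∈ B₁`, then there exists `γ = Σ_{n≥1} εⁿγₙ`, `γₙ ∈ B₁`,
with `F + Dγ + γ⋆γ = 0`; consequently `D̄ = D + [γ,·]⋆` satisfies `D̄² = 0`
(on homogeneous elements, where the graded commutator is defined). -/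
theorem fedosov_one_form_exists
    (ℬ : ℕ → Submodule ℝ B)
    (m : ℕ → B →ₗ[ℝ] B →ₗ[ℝ] B)
    (hmdeg : ∀ (k p q : ℕ), ∀ x ∈ ℬ p, ∀ y ∈ ℬ q, m k x y ∈ ℬ (p + q))
    (hassoc : ∀ F G H : ℕ → B,
      starConv m (starConv m F G) H = starConv m F (starConv m G H))
    (Dops : ℕ → B →ₗ[ℝ] B)
    (hDdeg : ∀ (n p : ℕ), ∀ x ∈ ℬ p, Dops n x ∈ ℬ (p + 1))
    (hDderiv : ∀ (p : ℕ) (F G : ℕ → B), (∀ n, F n ∈ ℬ p) →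
      opConv Dops (starConv m F G) =
        starConv m (opConv Dops F) G + ((-1 : ℝ) ^ p) • starConv m F (opConv Dops G))
    (Fser : ℕ → B) (hF0 : Fser 0 = 0) (hFdeg : ∀ n, Fser n ∈ ℬ 2)
    (hcurv : ∀ a : ℕ → B,
      opConv Dops (opConv Dops a) = starConv m Fser a - starConv m a Fser)
    (hBianchi : opConv Dops Fser = 0)
    (hexact : ∀ b ∈ ℬ 2, Dops 0 b = 0 → ∃ c ∈ ℬ 1, b = Dops 0 c) :
    (∀ x : B, Dops 0 (Dops 0 x) = 0) ∧
    ∃ γ : ℕ → B, γ 0 = 0 ∧ (∀ n, γ n ∈ ℬ 1) ∧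
      Fser + opConv Dops γ + starConv m γ γ = 0 ∧
      (∀ (p : ℕ) (a : ℕ → B), (∀ n, a n ∈ ℬ p) →
        (fun b : ℕ → B =>
            opConv Dops b + starConv m γ b - ((-1 : ℝ) ^ (p + 1)) • starConv m b γ)
          (opConv Dops a + starConv m γ a - ((-1 : ℝ) ^ p) • starConv m a γ) = 0) := by
  refine ⟨dops_zero_dops_zero_apply m Dops hF0 hcurv, ?_⟩
  obtain ⟨γ, hγ₀, hγ, hflat⟩ := exists_fedosovCurvature_eq_zero m Dops hmdeg hassoc hDdeg hDderiv
    hF0 hFdeg hcurv hBianchi hexact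
  refine ⟨γ, hγ₀ 0 one_pos, hγ, hflat, fun p a ha => ?_⟩
  change twistedDiff m Dops γ (p + 1) (twistedDiff m Dops γ p a) = 0
  rw [twistedDiff_twistedDiff m Dops hassoc hDderiv hcurv hγ ha, hflat]
  funext n
  simp [starConv]

end Fedosov
end
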